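/- Let ℓ ≥ 1 and v ≥ 2 be integers, and let F be the free group on generators x₁, x₂, …, x_{ℓ+2}. Let H be the subgroup generated by the elements x₁^i x₂ x₁^{-(i+1)} for 0 ≤ i ≤ v−2 together with x₃, x₄, …, x_{ℓ+2}, and let K be the subgroup generated by x₁ and x₂. Then r̄(H ∩ K) · r̄(H ∨ K) · (v + ℓ − 2) = (v − 2) · (ℓ + 1) · r̄(H) · r̄(K); i.e., the ratio (r̄(H ∩ K) · r̄(H ∨ K)) / (r̄(H) · r̄(K)) equals (v−2)(ℓ+1)/(v+ℓ−2). -/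

import Mathlib

/-- The rank of a group: the minimal cardinality of a (finite) generating set. -/
noncomputable def grank (G : Type*) [Group G] : ℕ :=
  sInf {n : ℕ | ∃ S : Finset G, S.card = n ∧ Subgroup.closure (S : Set G) = ⊤}

/-- The reduced rank of a group: `max (0, rank - 1)` (truncated subtraction). -/
noncomputable def rbar (G : Type*) [Group G] : ℕ := grank G - 1

/-!
K = ⟨x₁, x₂⟩ is free of rank 2 and H ∨ K = F. For a free group on `Option X`, with `t` the
generator `none`, the elements `tⁿ x t^{-(n + e x)}` (n ∈ ℤ, x ∈ X) form a free family: this is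
the splitting `F(Option X) ≅ F(ℤ × X) ⋊ ℤ`, with ℤ shifting the first coordinate. The generators
of H are such elements (t = x₁, weight 1 on x₂ and 0 elsewhere), so H is free of rank v - 1 + ℓ.
The retraction of F onto K that kills x₃, …, x_{ℓ+2} fixes H ∩ K and maps H onto
⟨x₁ⁱ x₂ x₁^{-(i+1)}⟩, hence H ∩ K is this free group of rank v - 1. Ranks of free groups are
read off in the abelianization ℤ^X.
-/

open FreeGroup Function Subgroup

theorem grank_eq_rank (G : Type*) [Group G] [Group.FG G] : grank G = Group.rank G :=
  le_antisymm (Nat.sInf_le (Group.rank_spec G)) (le_csInf ⟨_, Group.rank_spec G⟩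
    fun _ ⟨_, hcard, hS⟩ => hcard ▸ Group.rank_le hS)

theorem FreeGroup.card_le_card_of_closure_eq_top {X : Type*} [Fintype X]
    {S : Finset (FreeGroup X)} (hS : closure (S : Set (FreeGroup X)) = ⊤) :
    Fintype.card X ≤ S.card := by
  classical
  let f : FreeGroup X →* Multiplicative (X → ℤ) := lift fun x => .ofAdd (Pi.single x 1)
  let V : Submodule ℤ (X → ℤ) := Submodule.span ℤ (Set.range fun s : S => (f s).toAdd)
  have hV : V = ⊤ := by
    have hcl : closure (S : Set (FreeGroup X)) ≤ V.toAddSubgroup.toSubgroup.comap f :=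
      closure_le _ |>.2 fun s hs => Submodule.subset_span ⟨⟨s, hs⟩, rfl⟩
    rw [hS] at hcl
    rw [eq_top_iff, ← (Pi.basisFun ℤ X).span_eq, Submodule.span_le]
    rintro _ ⟨x, rfl⟩
    simpa [f] using hcl (mem_top (of x))
  calc Fintype.card X = Module.finrank ℤ (X → ℤ) := (Module.finrank_fintype_fun_eq_card ℤ).symm
    _ ≤ Fintype.card S := finrank_le_of_span_eq_top hV
    _ = S.card := Fintype.card_coe S

theorem FreeGroup.rank_eq_card (X : Type*) [Fintype X] :
    Group.rank (FreeGroup X) = Fintype.card X := by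
  obtain ⟨S, hcard, hS⟩ := Group.rank_spec (FreeGroup X)
  refine le_antisymm ?_ (hcard ▸ card_le_card_of_closure_eq_top hS)
  classical
  calc Group.rank (FreeGroup X) ≤ (Finset.univ.image (of : X → FreeGroup X)).card :=
        Group.rank_le (by simp [closure_range_of])
    _ = Fintype.card X := by rw [Finset.card_image_of_injective _ of_injective, Finset.card_univ]

theorem grank_closure_range_of_injective {X G : Type*} [Fintype X] [Group G]
    {f : FreeGroup X →* G} (hf : Injective f) :
    grank (closure (Set.range (f ∘ of))) = Fintype.card X := by
  have hrange : f.range = closure (Set.range (f ∘ of)) := by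
    rw [← range_lift_eq_closure]
    congr
    ext
    simp
  rw [← hrange, grank_eq_rank, ← Group.rank_congr (MonoidHom.ofInjective hf), rank_eq_card]

theorem grank_top {X : Type*} [Fintype X] :
    grank ↥(⊤ : Subgroup (FreeGroup X)) = Fintype.card X := by
  rw [← closure_range_of]
  exact grank_closure_range_of_injective (f := MonoidHom.id _) injective_id

namespace FreeGroup

variable {X : Type*}

def shiftAction : Multiplicative ℤ →* MulAut (FreeGroup (ℤ × X)) where
  toFun n := freeGroupCongr ((Equiv.addRight n.toAdd).prodCongr (Equiv.refl X))
  map_one' := by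
    rw [MulAut.one_def, ← freeGroupCongr_refl]
    congr
    ext <;> simp
  map_mul' a b := by
    rw [MulAut.mul_def, freeGroupCongr_trans]
    congr
    ext p
    · simp only [toAdd_mul, Equiv.trans_apply, Equiv.prodCongr_apply, Prod.map_fst,
        Equiv.coe_addRight]
      ring
    · rfl

@[simp]
theorem shiftAction_apply_of (n m : ℤ) (x : X) :
    shiftAction (.ofAdd n) (of (m, x)) = of (m + n, x) := rfl

def twistedConjugates (e : X → ℤ) : FreeGroup (ℤ × X) →* FreeGroup (Option X) :=
  lift fun p => of none ^ p.1 * of (some p.2) * of none ^ (-(p.1 + e p.2))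

theorem twistedConjugates_injective (e : X → ℤ) : Injective (twistedConjugates e) := by
  let t : FreeGroup (ℤ × X) ⋊[shiftAction] Multiplicative ℤ := .inr (.ofAdd 1)
  let r : FreeGroup (Option X) →* FreeGroup (ℤ × X) ⋊[shiftAction] Multiplicative ℤ :=
    lift fun o => o.elim t fun x => .inl (of (0, x)) * t ^ e x
  have ht (n : ℤ) : t ^ n = .inr (.ofAdd n) := by
    rw [← _root_.map_zpow, ← ofAdd_zsmul, smul_eq_mul, mul_one]
  have hr : r.comp (twistedConjugates e) = SemidirectProduct.inl := by
    refine ext_hom _ _ fun ⟨n, x⟩ => ?_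
    have hr_none : r (of none) = t := lift_apply_of
    have hr_some : r (of (some x)) = .inl (of (0, x)) * t ^ e x := lift_apply_of
    calc r (twistedConjugates e (of (n, x)))
        = t ^ n * (.inl (of (0, x)) * t ^ e x) * t ^ (-(n + e x)) := by
          rw [twistedConjugates, lift_apply_of, _root_.map_mul, _root_.map_mul, _root_.map_zpow,
            _root_.map_zpow, hr_none, hr_some]
      _ = t ^ n * .inl (of (0, x)) * (t ^ n)⁻¹ := by group
      _ = .inl (of (n, x)) := by
          rw [ht, ← _root_.map_inv, ← SemidirectProduct.inl_aut, shiftAction_apply_of, zero_add]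
  refine .of_comp (f := r) ?_
  rw [← MonoidHom.coe_comp, hr]
  exact SemidirectProduct.inl_injective

end FreeGroup

section Subgroups

variable (ℓ v : ℕ)

-- `Fin (v - 2 + 1)` rather than `Fin (v - 1)`, to match `i ≤ v - 2` also when `v < 2`.
noncomputable def basisHomH : FreeGroup (Fin (v - 2 + 1) ⊕ Fin ℓ) →* FreeGroup (Fin (ℓ + 2)) :=
  lift <| Sum.elim (fun i => of 0 ^ ((i : ℕ) : ℤ) * of 1 * of 0 ^ (-(((i : ℕ) : ℤ) + 1)))
    fun t => of t.succ.succ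

theorem basisHomH_injective : Injective (basisHomH ℓ v) := by
  let e : Fin (ℓ + 1) → ℤ := fun k => if k = 0 then 1 else 0
  let b : Fin (v - 2 + 1) ⊕ Fin ℓ → ℤ × Fin (ℓ + 1) :=
    Sum.elim (fun i => ((i : ℕ), 0)) fun t => (0, t.succ)
  have hb : Injective b := by
    rintro (i | t) (i' | t') h <;> simp [b] at h ⊢
    · exact Fin.ext h
    · exact Fin.succ_ne_zero _ h.2.symm
    · exact h
  have hfactor : basisHomH ℓ v = (freeGroupCongr (finSuccEquiv (ℓ + 1)).symm).toMonoidHom.comp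
      ((twistedConjugates e).comp (map b)) := by
    refine ext_hom _ _ fun x => ?_
    rcases x with i | t <;> simp [basisHomH, twistedConjugates, b, e]
  rw [hfactor]
  exact (freeGroupCongr _).injective.comp
    ((twistedConjugates_injective e).comp (map_injective hb))

def subgroupH : Subgroup (FreeGroup (Fin (ℓ + 2))) :=
  closure ({g | ∃ i : ℕ, i ≤ v - 2 ∧ g = of 0 ^ (i : ℤ) * of 1 * of 0 ^ (-((i : ℤ) + 1))} ∪
    {g | ∃ j : Fin (ℓ + 2), 2 ≤ (j : ℕ) ∧ g = of j})

def subgroupK : Subgroup (FreeGroup (Fin (ℓ + 2))) := closure {of 0, of 1}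

theorem closure_range_basisHomH : closure (Set.range (basisHomH ℓ v ∘ of)) = subgroupH ℓ v := by
  have hcomp : basisHomH ℓ v ∘ of = Sum.elim
      (fun i : Fin (v - 2 + 1) => of 0 ^ ((i : ℕ) : ℤ) * of 1 * of 0 ^ (-(((i : ℕ) : ℤ) + 1)))
      fun t : Fin ℓ => of t.succ.succ := by
    ext (i | t) <;> simp [basisHomH]
  rw [subgroupH, hcomp, Set.Sum.elim_range]
  congr 2 <;> ext g
  · constructor
    · rintro ⟨i, rfl⟩
      exact ⟨i, by omega, rfl⟩
    · rintro ⟨i, hi, rfl⟩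
      exact ⟨⟨i, by omega⟩, rfl⟩
  · constructor
    · rintro ⟨t, rfl⟩
      exact ⟨t.succ.succ, by simp, rfl⟩
    · rintro ⟨j, hj, rfl⟩
      exact ⟨⟨j - 2, by omega⟩, congrArg of (Fin.ext (by simp; omega))⟩

noncomputable def retractK : FreeGroup (Fin (ℓ + 2)) →* FreeGroup (Fin (ℓ + 2)) :=
  lift fun j => if (j : ℕ) < 2 then of j else 1

theorem retractK_of_lt {j : Fin (ℓ + 2)} (hj : (j : ℕ) < 2) : retractK ℓ (of j) = of j :=
  lift_apply_of.trans (if_pos hj)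

theorem retractK_of_le {j : Fin (ℓ + 2)} (hj : 2 ≤ (j : ℕ)) : retractK ℓ (of j) = 1 :=
  lift_apply_of.trans (if_neg (not_lt.2 hj))

theorem subgroupK_le_eqLocus_retractK : subgroupK ℓ ≤ (retractK ℓ).eqLocus (MonoidHom.id _) := by
  rw [subgroupK, closure_le]
  rintro _ (rfl | rfl)
  · exact retractK_of_lt ℓ (j := 0) (by simp)
  · exact retractK_of_lt ℓ (j := 1) (by simp)

theorem map_retractK_subgroupH_le :
    (subgroupH ℓ v).map (retractK ℓ) ≤ closure (Set.range (basisHomH ℓ v ∘ of ∘ Sum.inl)) := by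
  rw [← closure_range_basisHomH, MonoidHom.map_closure, closure_le]
  rintro _ ⟨_, ⟨i | t, rfl⟩, rfl⟩
  · have h0 : retractK ℓ (of 0) = of 0 := retractK_of_lt ℓ (by simp)
    have h1 : retractK ℓ (of 1) = of 1 := retractK_of_lt ℓ (by simp)
    have hfix : retractK ℓ (basisHomH ℓ v (of (.inl i))) = basisHomH ℓ v (of (.inl i)) := by
      simp [basisHomH, h0, h1]
    exact hfix ▸ subset_closure ⟨i, rfl⟩
  · have hkill : retractK ℓ (basisHomH ℓ v (of (.inr t))) = 1 := by
      simp [basisHomH, retractK_of_le]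
    exact hkill ▸ one_mem _

theorem of_mem_subgroupK_of_lt {j : Fin (ℓ + 2)} (hj : (j : ℕ) < 2) : of j ∈ subgroupK ℓ := by
  rcases j with ⟨_ | _ | j, _⟩
  · exact subset_closure (Or.inl rfl)
  · exact subset_closure (Or.inr rfl)
  · simp at hj

theorem subgroupH_inf_subgroupK :
    subgroupH ℓ v ⊓ subgroupK ℓ = closure (Set.range (basisHomH ℓ v ∘ of ∘ Sum.inl)) := by
  refine le_antisymm ?_ (le_inf ?_ ?_)
  · rintro g ⟨hgH, hgK⟩
    have hfix : retractK ℓ g = g := subgroupK_le_eqLocus_retractK ℓ hgK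
    rw [← hfix]
    exact map_retractK_subgroupH_le ℓ v (mem_map_of_mem _ hgH)
  · rw [← closure_range_basisHomH]
    exact closure_mono (Set.range_comp_subset_range Sum.inl (basisHomH ℓ v ∘ of))
  · rw [closure_le]
    rintro _ ⟨i, rfl⟩
    simp only [comp_apply, basisHomH, lift_apply_of, Sum.elim_inl]
    have h0 := of_mem_subgroupK_of_lt ℓ (j := 0) (by simp)
    have h1 := of_mem_subgroupK_of_lt ℓ (j := 1) (by simp)
    exact mul_mem (mul_mem (zpow_mem h0 _) h1) (zpow_mem h0 _)

theorem subgroupH_sup_subgroupK : subgroupH ℓ v ⊔ subgroupK ℓ = ⊤ := by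
  rw [eq_top_iff, ← closure_range_of, closure_le]
  rintro _ ⟨j, rfl⟩
  rcases lt_or_ge (j : ℕ) 2 with hj | hj
  · exact mem_sup_right (of_mem_subgroupK_of_lt ℓ hj)
  · exact mem_sup_left (subset_closure (Or.inr ⟨j, hj, rfl⟩))

theorem grank_subgroupH : grank (subgroupH ℓ v) = v - 2 + 1 + ℓ := by
  rw [← closure_range_basisHomH, grank_closure_range_of_injective (basisHomH_injective ℓ v)]
  simp

theorem grank_subgroupH_inf_subgroupK : grank ↥(subgroupH ℓ v ⊓ subgroupK ℓ) = v - 2 + 1 := by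
  rw [subgroupH_inf_subgroupK]
  exact (grank_closure_range_of_injective (f := (basisHomH ℓ v).comp (map Sum.inl))
    ((basisHomH_injective ℓ v).comp (map_injective Sum.inl_injective))).trans (Fintype.card_fin _)

theorem grank_subgroupK : grank (subgroupK ℓ) = 2 := by
  have hK : subgroupK ℓ = closure (Set.range (map ![(0 : Fin (ℓ + 2)), 1] ∘ of)) := by
    rw [subgroupK]
    congr
    ext g
    simp [Set.range_comp, eq_comm]
  have hinj : Injective ![(0 : Fin (ℓ + 2)), 1] := by
    intro a b
    fin_cases a <;> fin_cases b <;> simp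
  rw [hK, grank_closure_range_of_injective (map_injective hinj), Fintype.card_fin]

end Subgroups

/-- With `H = ⟨x₁ⁱx₂x₁^{-(i+1)} (0 ≤ i ≤ v-2), x₃, …, x_{ℓ+2}⟩` and `K = ⟨x₁, x₂⟩`
in the free group on `x₁, …, x_{ℓ+2}`, the ratio
`(r̄(H ∩ K)·r̄(H ∨ K)) / (r̄(H)·r̄(K))` equals `(v-2)(ℓ+1)/(v+ℓ-2)`, stated
multiplicatively in ℕ. -/
theorem rbar_ratio (ℓ v : ℕ)
    (x₁ x₂ : FreeGroup (Fin (ℓ + 2)))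
    (hx₁ : x₁ = FreeGroup.of ⟨0, by omega⟩)
    (hx₂ : x₂ = FreeGroup.of ⟨1, by omega⟩)
    (H K : Subgroup (FreeGroup (Fin (ℓ + 2))))
    (hH : H = Subgroup.closure
      ({g | ∃ i : ℕ, i ≤ v - 2 ∧ g = x₁ ^ (i : ℤ) * x₂ * x₁ ^ (-((i : ℤ) + 1))} ∪
       {g | ∃ j : Fin (ℓ + 2), 2 ≤ (j : ℕ) ∧ g = FreeGroup.of j}))
    (hK : K = Subgroup.closure {x₁, x₂}) :
    rbar ↥(H ⊓ K) * rbar ↥(H ⊔ K) * (v + ℓ - 2)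
      = (v - 2) * (ℓ + 1) * (rbar ↥H * rbar ↥K) := by
  subst hx₁ hx₂
  obtain rfl : H = subgroupH ℓ v := hH
  obtain rfl : K = subgroupK ℓ := hK
  have hsub : (v - 2) * (v + ℓ - 2) = (v - 2) * (v - 2 + ℓ) := by
    rcases Nat.lt_or_ge v 2 with hv | hv
    · simp [Nat.sub_eq_zero_of_le hv.le]
    · rw [Nat.sub_add_comm hv]
  have hrI : rbar ↥(subgroupH ℓ v ⊓ subgroupK ℓ) = v - 2 := by
    rw [rbar, grank_subgroupH_inf_subgroupK, Nat.add_sub_cancel]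
  have hrJ : rbar ↥(subgroupH ℓ v ⊔ subgroupK ℓ) = ℓ + 1 := by
    rw [rbar, subgroupH_sup_subgroupK, grank_top, Fintype.card_fin]
    rfl
  have hrH : rbar (subgroupH ℓ v) = v - 2 + ℓ := by
    rw [rbar, grank_subgroupH]
    omega
  have hrK : rbar (subgroupK ℓ) = 1 := by
    rw [rbar, grank_subgroupK]
  rw [hrI, hrJ, hrH, hrK, mul_one, mul_right_comm, hsub, mul_right_comm]
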